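/- arXiv:1311.3122 — 5 statements merged into one kernel-verified Lean document; each statement's English description precedes it below -/
import Mathlib

section
/- Let 0 < r and let K be a compact subset of the open disk {z ∈ ℂ : |z| < r}. Then there exists a constant c > 0, depending only on K and r, such that for every function f : ℂ → ℂ that is continuous on the closed disk {z : |z| ≤ r} and holomorphic on the open disk {z : |z| < r}, one has sup_{z ∈ K} |f(z)| ≤ c · ( (1/2π) ∫_0^{2π} |f(r·e^{iθ})|² dθ )^{1/2}. -/
/-!
For `z` with `‖z‖ ≤ ρ < r`, Cauchy's formula writes `f z` as the circle average of
`w / (w - z) • f w` over `‖w‖ = r`. On that circle the kernel has modulus at most `r / (r - ρ)`,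
so `‖f z‖` is at most `r / (r - ρ)` times the mean of `‖f‖`, which Jensen's inequality bounds by
the root mean square of `‖f‖`. Compactness of `K` provides one `ρ < r` with `K ⊆ ball 0 ρ`.
-/

open Real MeasureTheory Metric Set

namespace Real

variable {c : ℂ} {R : ℝ}

theorem norm_circleAverage_le_circleAverage_norm {E : Type*} [NormedAddCommGroup E]
    [NormedSpace ℝ E] (f : ℂ → E) :
    ‖circleAverage f c R‖ ≤ circleAverage (fun w ↦ ‖f w‖) c R := by
  rw [circleAverage_def, circleAverage_def, norm_smul, smul_eq_mul,
    Real.norm_of_nonneg (by positivity)]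
  gcongr
  exact intervalIntegral.norm_integral_le_integral_norm two_pi_pos.le

theorem sq_circleAverage_le_circleAverage_sq {f : ℂ → ℝ} (hf : CircleIntegrable f c R)
    (hf₂ : CircleIntegrable (fun w ↦ f w ^ 2) c R) :
    circleAverage f c R ^ 2 ≤ circleAverage (fun w ↦ f w ^ 2) c R := by
  have : NeZero (volume (Ioc 0 (2 * π))) := ⟨by simp [pi_pos]⟩
  rw [CircleIntegrable, intervalIntegrable_iff_integrableOn_Ioc_of_le two_pi_pos.le] at hf hf₂
  simp only [circleAverage_eq_intervalAverage, uIoc_of_le two_pi_pos.le]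
  exact even_two.convexOn_pow.map_average_le (continuous_pow 2).continuousOn isClosed_univ
    (by simp) hf hf₂

end Real

namespace DiffContOnCl

variable {E : Type*} [NormedAddCommGroup E] [NormedSpace ℂ E] [CompleteSpace E]
  {f : ℂ → E} {c z : ℂ} {ρ R : ℝ}

theorem norm_le_div_mul_circleAverage_norm (hf : DiffContOnCl ℂ f (ball c R))
    (hz : z ∈ closedBall c ρ) (hρR : ρ < R) :
    ‖f z‖ ≤ R / (R - ρ) * Real.circleAverage (fun w ↦ ‖f w‖) c R := by
  have hR : 0 < R := (dist_nonneg.trans hz).trans_lt hρR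
  have hfc : ContinuousOn f (sphere c R) :=
    (closure_ball c hR.ne' ▸ hf.continuousOn).mono sphere_subset_closedBall
  have hsep : ∀ w ∈ sphere c R, R - ρ ≤ ‖w - z‖ := fun w hw ↦ by
    linarith [norm_sub_le_norm_sub_add_norm_sub w z c, mem_sphere_iff_norm.mp hw,
      mem_closedBall_iff_norm.mp hz]
  have hkernel : ∀ w ∈ sphere c R, ‖(w - c) / (w - z)‖ ≤ R / (R - ρ) := fun w hw ↦ by
    rw [norm_div, mem_sphere_iff_norm.mp hw]
    gcongr
    exact hsep w hw
  have hkernel_cont : ContinuousOn (fun w ↦ (w - c) / (w - z)) (sphere c R) :=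
    (continuousOn_id.sub continuousOn_const).div (continuousOn_id.sub continuousOn_const)
      fun w hw ↦ norm_pos_iff.mp ((sub_pos.mpr hρR).trans_le (hsep w hw))
  have hf' : DiffContOnCl ℂ f (ball c |R|) := by rwa [abs_of_pos hR]
  have hz' : z ∈ ball c |R| := by rw [abs_of_pos hR]; exact closedBall_subset_ball hρR hz
  calc ‖f z‖ = ‖Real.circleAverage (fun w ↦ ((w - c) / (w - z)) • f w) c R‖ := by
        rw [hf'.circleAverage_smul_div hz']
    _ ≤ Real.circleAverage (fun w ↦ ‖((w - c) / (w - z)) • f w‖) c R :=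
        norm_circleAverage_le_circleAverage_norm _
    _ ≤ Real.circleAverage (fun w ↦ R / (R - ρ) * ‖f w‖) c R := by
        apply circleAverage_mono
        · exact (hkernel_cont.smul hfc).norm.circleIntegrable hR.le
        · exact (continuousOn_const.mul hfc.norm).circleIntegrable hR.le
        · intro w hw
          rw [norm_smul]
          exact mul_le_mul_of_nonneg_right (hkernel w (abs_of_pos hR ▸ hw)) (norm_nonneg _)
    _ = R / (R - ρ) * Real.circleAverage (fun w ↦ ‖f w‖) c R := by
        simp only [← smul_eq_mul, circleAverage_fun_smul]

theorem norm_le_div_mul_sqrt_circleAverage_norm_sq (hf : DiffContOnCl ℂ f (ball c R))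
    (hz : z ∈ closedBall c ρ) (hρR : ρ < R) :
    ‖f z‖ ≤ R / (R - ρ) * √(Real.circleAverage (fun w ↦ ‖f w‖ ^ 2) c R) := by
  have hR : 0 < R := (dist_nonneg.trans hz).trans_lt hρR
  have hfc : ContinuousOn (fun w ↦ ‖f w‖) (sphere c R) :=
    ((closure_ball c hR.ne' ▸ hf.continuousOn).mono sphere_subset_closedBall).norm
  refine (hf.norm_le_div_mul_circleAverage_norm hz hρR).trans ?_
  gcongr
  exact (le_abs_self _).trans <| abs_le_sqrt <| sq_circleAverage_le_circleAverage_sq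
    (hfc.circleIntegrable hR.le) ((hfc.pow 2).circleIntegrable hR.le)

end DiffContOnCl

theorem stmt_0 (r : ℝ) (hr : 0 < r) (K : Set ℂ) (hK : IsCompact K)
    (hKr : K ⊆ Metric.ball (0 : ℂ) r) :
    ∃ c > 0, ∀ f : ℂ → ℂ,
      ContinuousOn f (Metric.closedBall (0 : ℂ) r) →
      DifferentiableOn ℂ f (Metric.ball (0 : ℂ) r) →
      ∀ z ∈ K, ‖f z‖ ≤
        c * Real.sqrt ((1 / (2 * π)) * ∫ θ in (0 : ℝ)..(2 * π),
          ‖f ((r : ℂ) * Complex.exp (θ * Complex.I))‖ ^ 2) := by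
  obtain ⟨ρ, hρr, hKρ⟩ := exists_lt_subset_ball hK.isClosed hKr
  refine ⟨r / (r - ρ), div_pos hr (sub_pos.mpr hρr), fun f hfc hfd z hz ↦ ?_⟩
  have hf : DiffContOnCl ℂ f (ball 0 r) := ⟨hfd, by rwa [closure_ball 0 hr.ne']⟩
  simpa [circleAverage_def, circleMap] using
    hf.norm_le_div_mul_sqrt_circleAverage_norm_sq (ball_subset_closedBall (hKρ hz)) hρr
end

section
/- Let 0 < r < r' < 1 < R' < R, and for n ∈ ℤ set d_n = √(r^{2n} + R^{2n}) (integer powers, i.e. zpow). Let c : ℤ → ℂ be a sequence with ∑_{n ∈ ℤ} |c_n|² < ∞. Then for every N ∈ ℕ and every z ∈ ℂ with r' ≤ |z| ≤ R', the series ∑_{|n| ≥ N} c_n · z^n / d_n converges absolutely and satisfies | ∑_{|n| ≥ N} c_n z^n / d_n | ≤ ( ∑_{n ∈ ℤ} |c_n|² )^{1/2} · ( (R'/R)^{2N} / (1 − (R'/R)²) + (r/r')^{2N} / (1 − (r/r')²) )^{1/2}. -/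
open Real

/-!
Write the tail as `∑ c_n w_n` with weights `w_n = ‖z‖ ^ n / d_n` and apply Cauchy–Schwarz.
Since `d_n ≥ R ^ n` and `d_n ≥ r ^ n`, the squared weights are bounded by `((R' / R) ^ 2) ^ n`
for `n ≥ 0` and by `((r / r') ^ 2) ^ |n|` for `n < 0`, so their tail over `|n| ≥ N` is at most
the sum of two geometric tails.
-/

lemma sq_zpow_div_sqrt_le {x y a b : ℝ} (hx : 0 ≤ x) (hxy : x ≤ y) (ha : 0 ≤ a) (hb : 0 < b)
    (k : ℕ) : (x ^ (k : ℤ) / √(a ^ (2 * (k : ℤ)) + b ^ (2 * (k : ℤ)))) ^ 2 ≤ ((y / b) ^ 2) ^ k := by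
  have h2k : (2 * (k : ℤ)) = ((2 * k : ℕ) : ℤ) := by push_cast; ring
  rw [h2k, zpow_natCast, zpow_natCast, zpow_natCast, div_pow, sq_sqrt (by positivity),
    ← pow_mul, ← pow_mul, mul_comm k]
  calc x ^ (2 * k) / (a ^ (2 * k) + b ^ (2 * k)) ≤ x ^ (2 * k) / b ^ (2 * k) :=
        div_le_div_of_nonneg_left (by positivity) (by positivity)
          (le_add_of_nonneg_left (by positivity))
    _ = (x / b) ^ (2 * k) := (div_pow x b _).symm
    _ ≤ (y / b) ^ (2 * k) := by gcongr

lemma sq_zpow_neg_div_sqrt_le {x y a b : ℝ} (hy : 0 < y) (hyx : y ≤ x) (ha : 0 < a) (hb : 0 ≤ b)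
    (k : ℕ) :
    (x ^ (-(k : ℤ)) / √(a ^ (2 * -(k : ℤ)) + b ^ (2 * -(k : ℤ)))) ^ 2 ≤ ((a / y) ^ 2) ^ k := by
  have h := sq_zpow_div_sqrt_le (inv_nonneg.mpr (hy.trans_le hyx).le) (inv_anti₀ hy hyx)
    (inv_nonneg.mpr hb) (inv_pos.mpr ha) k
  rwa [inv_div_inv, inv_zpow', inv_zpow', inv_zpow', add_comm, ← mul_neg] at h

lemma summable_and_tsum_mul_le_sqrt_mul_sqrt {ι : Type*} {f g : ι → ℝ} (hf : ∀ i, 0 ≤ f i)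
    (hg : ∀ i, 0 ≤ g i) (hf2 : Summable fun i => f i ^ 2) (hg2 : Summable fun i => g i ^ 2) :
    Summable (fun i => f i * g i) ∧
      ∑' i, f i * g i ≤ √(∑' i, f i ^ 2) * √(∑' i, g i ^ 2) := by
  simpa only [rpow_two, sqrt_eq_rpow] using
    summable_and_inner_le_Lp_mul_Lq_tsum_of_nonneg .two_two hf hg
      (by simpa only [rpow_two] using hf2) (by simpa only [rpow_two] using hg2)

lemma summable_and_tsum_tail_le_geometric {f : ℤ → ℝ} (hf : ∀ n, 0 ≤ f n) {p q : ℝ}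
    (hp₀ : 0 ≤ p) (hp₁ : p < 1) (hq₀ : 0 ≤ q) (hq₁ : q < 1)
    (hfp : ∀ k : ℕ, f k ≤ p ^ k) (hfq : ∀ k : ℕ, f (-k) ≤ q ^ k) (N : ℕ) :
    Summable (fun n : {n : ℤ // (N : ℤ) ≤ |n|} => f n) ∧
      ∑' n : {n : ℤ // (N : ℤ) ≤ |n|}, f n ≤ p ^ N / (1 - p) + q ^ N / (1 - q) := by
  have hN (n : {n : ℤ // (N : ℤ) ≤ |n|}) : N ≤ n.1.natAbs := by
    have := n.2
    rwa [Int.abs_eq_natAbs, Nat.cast_le] at this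
  -- `n ↦ (sign n, |n| - N)` embeds the tail into two copies of `ℕ`, one geometric series each.
  let e (n : {n : ℤ // (N : ℤ) ≤ |n|}) : ℕ ⊕ ℕ :=
    if 0 ≤ n.1 then .inl (n.1.natAbs - N) else .inr (n.1.natAbs - N)
  let g : ℕ ⊕ ℕ → ℝ := Sum.elim (fun k => p ^ N * p ^ k) (fun k => q ^ N * q ^ k)
  have hg : HasSum g (p ^ N / (1 - p) + q ^ N / (1 - q)) := by
    simp only [div_eq_mul_inv]
    exact ((hasSum_geometric_of_lt_one hp₀ hp₁).mul_left _).sum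
      ((hasSum_geometric_of_lt_one hq₀ hq₁).mul_left _)
  have he : e.Injective := by
    intro m n h
    have hm := hN m
    have hn := hN n
    simp only [e] at h
    apply Subtype.ext
    split_ifs at h <;> simp only [Sum.inl.injEq, Sum.inr.injEq] at h <;> omega
  have hfg (n : {n : ℤ // (N : ℤ) ≤ |n|}) : f n ≤ g (e n) := by
    by_cases h0 : 0 ≤ n.1
    · simp only [e, g, if_pos h0, Sum.elim_inl, ← pow_add, Nat.add_sub_cancel' (hN n)]
      obtain ⟨k, hk⟩ := Int.eq_ofNat_of_zero_le h0
      simpa [hk] using hfp k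
    · simp only [e, g, if_neg h0, Sum.elim_inr, ← pow_add, Nat.add_sub_cancel' (hN n)]
      obtain ⟨k, hk⟩ := Int.exists_eq_neg_ofNat (not_le.mp h0).le
      simpa [hk] using hfq k
  have hsum : Summable (fun n : {n : ℤ // (N : ℤ) ≤ |n|} => f n) :=
    .of_nonneg_of_le (fun n => hf n) hfg (hg.summable.comp_injective he)
  refine ⟨hsum, hg.tsum_eq ▸ hsum.tsum_le_tsum_of_inj e he (fun c _ => ?_) hfg hg.summable⟩
  cases c <;> simp only [g, Sum.elim_inl, Sum.elim_inr] <;> positivity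

theorem stmt_1_general (r r' R' R : ℝ) (h0 : 0 < r) (h1 : r < r') (h4 : R' < R)
    (d : ℤ → ℝ) (hd : ∀ n : ℤ, d n = Real.sqrt (r ^ (2 * n) + R ^ (2 * n)))
    (c : ℤ → ℂ) (hc : Summable fun n : ℤ => ‖c n‖ ^ 2)
    (N : ℕ) (z : ℂ) (hz1 : r' ≤ ‖z‖) (hz2 : ‖z‖ ≤ R') :
    Summable (fun n : {n : ℤ // (N : ℤ) ≤ |n|} =>
      ‖c n.1 * z ^ n.1 / (d n.1 : ℂ)‖) ∧
    ‖(∑' n : {n : ℤ // (N : ℤ) ≤ |n|}, c n.1 * z ^ n.1 / (d n.1 : ℂ))‖ ≤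
      Real.sqrt (∑' n : ℤ, ‖c n‖ ^ 2) *
      Real.sqrt ((R' / R) ^ (2 * N) / (1 - (R' / R) ^ 2)
        + (r / r') ^ (2 * N) / (1 - (r / r') ^ 2)) := by
  have hr' : 0 < r' := h0.trans h1
  have hz : 0 < ‖z‖ := hr'.trans_le hz1
  have hR' : 0 < R' := hz.trans_le hz2
  have hR : 0 < R := hR'.trans h4
  set w : ℤ → ℝ := fun n => ‖z‖ ^ n / d n with hw
  have hd₀ (n : ℤ) : 0 ≤ d n := hd n ▸ sqrt_nonneg _
  have hw₀ (n : ℤ) : 0 ≤ w n := div_nonneg (zpow_nonneg hz.le n) (hd₀ n)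
  have hnorm (n : ℤ) : ‖c n * z ^ n / (d n : ℂ)‖ = ‖c n‖ * w n := by
    rw [norm_div, norm_mul, norm_zpow, Complex.norm_real, norm_of_nonneg (hd₀ n), mul_div_assoc]
  obtain ⟨hw₂, hw₂_le⟩ := summable_and_tsum_tail_le_geometric
    (f := fun n => w n ^ 2) (p := (R' / R) ^ 2) (q := (r / r') ^ 2) (fun n => sq_nonneg _)
    (sq_nonneg _) (pow_lt_one₀ (by positivity) ((div_lt_one hR).mpr h4) two_ne_zero)
    (sq_nonneg _) (pow_lt_one₀ (by positivity) ((div_lt_one hr').mpr h1) two_ne_zero)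
    (fun k => by simpa only [hw, hd] using sq_zpow_div_sqrt_le hz.le hz2 h0.le hR k)
    (fun k => by simpa only [hw, hd] using sq_zpow_neg_div_sqrt_le hr' hz1 h0 hR.le k) N
  obtain ⟨hsum, hCS⟩ := summable_and_tsum_mul_le_sqrt_mul_sqrt
    (f := fun n : {n : ℤ // (N : ℤ) ≤ |n|} => ‖c n‖) (fun _ => norm_nonneg _) (fun n => hw₀ n)
    (hc.subtype _) hw₂
  have hsum' : Summable fun n : {n : ℤ // (N : ℤ) ≤ |n|} => ‖c n * z ^ n.1 / (d n : ℂ)‖ := by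
    simpa only [hnorm] using hsum
  refine ⟨hsum', ?_⟩
  calc _ ≤ ∑' n : {n : ℤ // (N : ℤ) ≤ |n|}, ‖c n * z ^ n.1 / (d n : ℂ)‖ :=
        norm_tsum_le_tsum_norm hsum'
    _ = ∑' n : {n : ℤ // (N : ℤ) ≤ |n|}, ‖c n‖ * w n := by simp only [hnorm]
    _ ≤ _ := hCS
    _ ≤ _ := by
      rw [pow_mul, pow_mul]
      gcongr
      exact hc.tsum_subtype_le _ _ (fun _ => sq_nonneg _)

theorem stmt_1 (r r' R' R : ℝ) (h0 : 0 < r) (h1 : r < r') (h2 : r' < 1)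
    (h3 : 1 < R') (h4 : R' < R)
    (d : ℤ → ℝ) (hd : ∀ n : ℤ, d n = Real.sqrt (r ^ (2 * n) + R ^ (2 * n)))
    (c : ℤ → ℂ) (hc : Summable fun n : ℤ => ‖c n‖ ^ 2)
    (N : ℕ) (z : ℂ) (hz1 : r' ≤ ‖z‖) (hz2 : ‖z‖ ≤ R') :
    Summable (fun n : {n : ℤ // (N : ℤ) ≤ |n|} =>
      ‖c n.1 * z ^ n.1 / (d n.1 : ℂ)‖) ∧
    ‖(∑' n : {n : ℤ // (N : ℤ) ≤ |n|}, c n.1 * z ^ n.1 / (d n.1 : ℂ))‖ ≤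
      Real.sqrt (∑' n : ℤ, ‖c n‖ ^ 2) *
      Real.sqrt ((R' / R) ^ (2 * N) / (1 - (R' / R) ^ 2)
        + (r / r') ^ (2 * N) / (1 - (r / r') ^ 2)) :=
  stmt_1_general r r' R' R h0 h1 h4 d hd c hc N z hz1 hz2
end

section
/- Let B(z) = C · ∏_{i=1}^n (z − a_i)/(1 − conj(a_i)·z) be a finite Blaschke product, and suppose ∑_{i=1}^n (1 − |a_i|)/(1 + |a_i|) > 1. Then the restriction of B to the unit circle is expanding: |B'(z)| > 1 for every z ∈ ℂ with |z| = 1, where B' denotes the complex derivative of B. -/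
/-!
On the unit circle every Blaschke factor `b_a` is unimodular and
`conj (b_a z) * z * b_a' z = (1 - |a|²) / |1 - ā z|²` is a positive real. Since the logarithmic
derivative of a product is the sum of those of its factors, `|B'(z)| = |conj (B z) * z * B'(z)|`
equals `∑ (1 - |a_i|²) / |1 - ā_i z|²`, and `|1 - ā_i z| ≤ 1 + |a_i|` bounds each term below by
`(1 - |a_i|) / (1 + |a_i|)`.
-/

open ComplexConjugate Finset

lemma conj_prod_mul_sum_prod_erase_mul {ι : Type*} [DecidableEq ι] (s : Finset ι) (u v : ι → ℂ)
    (hu : ∀ i ∈ s, ‖u i‖ = 1) :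
    conj (∏ i ∈ s, u i) * ∑ i ∈ s, (∏ j ∈ s.erase i, u j) * v i = ∑ i ∈ s, conj (u i) * v i := by
  rw [mul_sum]
  refine sum_congr rfl fun i hi => ?_
  have hunit : ∏ j ∈ s.erase i, conj (u j) * u j = 1 :=
    prod_eq_one fun j hj => by rw [Complex.conj_mul', hu j (mem_of_mem_erase hj)]; simp
  rw [prod_mul_distrib] at hunit
  rw [← mul_prod_erase s u hi, map_mul, map_prod]
  linear_combination conj (u i) * v i * hunit

noncomputable def blaschkeFactor (a z : ℂ) : ℂ := (z - a) / (1 - conj a * z)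

section BlaschkeFactor

variable {a z : ℂ}

lemma one_sub_conj_mul_ne_zero (ha : ‖a‖ < 1) (hz : ‖z‖ ≤ 1) : 1 - conj a * z ≠ 0 := by
  intro h
  have hnorm : ‖conj a * z‖ < 1 := by
    rw [norm_mul, Complex.norm_conj]
    nlinarith [norm_nonneg a, norm_nonneg z]
  rw [← sub_eq_zero.mp h, norm_one] at hnorm
  exact hnorm.false

lemma mul_conj_sub_eq_one_sub_conj_mul (hz : ‖z‖ = 1) : z * conj (z - a) = 1 - conj a * z := by
  have hzz : z * conj z = 1 := by rw [Complex.mul_conj', hz]; simp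
  rw [map_sub]
  linear_combination hzz

lemma norm_blaschkeFactor (ha : ‖a‖ < 1) (hz : ‖z‖ = 1) : ‖blaschkeFactor a z‖ = 1 := by
  have hnum : ‖z - a‖ = ‖1 - conj a * z‖ := by
    rw [← mul_conj_sub_eq_one_sub_conj_mul hz, norm_mul, hz, one_mul, Complex.norm_conj]
  rw [blaschkeFactor, norm_div, hnum,
    div_self (norm_ne_zero_iff.mpr (one_sub_conj_mul_ne_zero ha hz.le))]

lemma hasDerivAt_blaschkeFactor (hd : 1 - conj a * z ≠ 0) :
    HasDerivAt (blaschkeFactor a) ((1 - conj a * a) / (1 - conj a * z) ^ 2) z := by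
  have hnum : HasDerivAt (fun w => w - a) 1 z := (hasDerivAt_id z).sub_const a
  have hden : HasDerivAt (fun w => 1 - conj a * w) (-conj a) z := by
    simpa using ((hasDerivAt_id z).const_mul (conj a)).const_sub 1
  exact (hnum.div hden hd).congr_deriv (by ring)

lemma conj_blaschkeFactor_mul_mul_deriv (ha : ‖a‖ < 1) (hz : ‖z‖ = 1) :
    conj (blaschkeFactor a z) * z * ((1 - conj a * a) / (1 - conj a * z) ^ 2)
      = ((1 - ‖a‖ ^ 2) / ‖1 - conj a * z‖ ^ 2 : ℝ) := by
  have hd := one_sub_conj_mul_ne_zero ha hz.le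
  have hconj : conj (blaschkeFactor a z) * z = (1 - conj a * z) / conj (1 - conj a * z) := by
    rw [blaschkeFactor, map_div₀, div_mul_eq_mul_div, mul_comm _ z,
      mul_conj_sub_eq_one_sub_conj_mul hz]
  have hd' : conj (1 - conj a * z) ≠ 0 := (map_ne_zero _).mpr hd
  rw [hconj]
  push_cast
  rw [← Complex.conj_mul' a, ← Complex.conj_mul' (1 - conj a * z)]
  field_simp

lemma one_sub_div_one_add_le (ha : ‖a‖ < 1) (hz : ‖z‖ ≤ 1) :
    (1 - ‖a‖) / (1 + ‖a‖) ≤ (1 - ‖a‖ ^ 2) / ‖1 - conj a * z‖ ^ 2 := by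
  have hpos : 0 < ‖1 - conj a * z‖ := norm_pos_iff.mpr (one_sub_conj_mul_ne_zero ha hz)
  have hle : ‖1 - conj a * z‖ ≤ 1 + ‖a‖ :=
    calc ‖1 - conj a * z‖ ≤ ‖(1 : ℂ)‖ + ‖conj a * z‖ := norm_sub_le _ _
      _ ≤ 1 + ‖a‖ := by
        rw [norm_one, norm_mul, Complex.norm_conj]
        nlinarith [norm_nonneg a]
  have h1a : 0 < 1 + ‖a‖ := by positivity
  calc (1 - ‖a‖) / (1 + ‖a‖) = (1 - ‖a‖ ^ 2) / (1 + ‖a‖) ^ 2 := by field_simp; ring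
    _ ≤ (1 - ‖a‖ ^ 2) / ‖1 - conj a * z‖ ^ 2 := by
      have : 0 ≤ 1 - ‖a‖ ^ 2 := by nlinarith [norm_nonneg a]
      gcongr

end BlaschkeFactor

noncomputable def blaschkeProduct {ι : Type*} (C : ℂ) (s : Finset ι) (a : ι → ℂ) (z : ℂ) : ℂ :=
  C * ∏ i ∈ s, blaschkeFactor (a i) z

section BlaschkeProduct

variable {ι : Type*} {C z : ℂ} {s : Finset ι} {a : ι → ℂ}

lemma norm_blaschkeProduct (ha : ∀ i ∈ s, ‖a i‖ < 1) (hC : ‖C‖ = 1) (hz : ‖z‖ = 1) :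
    ‖blaschkeProduct C s a z‖ = 1 := by
  rw [blaschkeProduct, norm_mul, hC, one_mul, norm_prod,
    prod_eq_one fun i hi => norm_blaschkeFactor (ha i hi) hz]

lemma deriv_blaschkeProduct [DecidableEq ι] (ha : ∀ i ∈ s, ‖a i‖ < 1) (hz : ‖z‖ ≤ 1) :
    deriv (blaschkeProduct C s a) z = C * ∑ i ∈ s, (∏ j ∈ s.erase i, blaschkeFactor (a j) z)
      * ((1 - conj (a i) * a i) / (1 - conj (a i) * z) ^ 2) := by
  have hprod := HasDerivAt.fun_finsetProd fun i hi =>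
    hasDerivAt_blaschkeFactor (one_sub_conj_mul_ne_zero (ha i hi) hz)
  simp only [smul_eq_mul] at hprod
  exact (hprod.const_mul C).deriv

lemma conj_blaschkeProduct_mul_mul_deriv (ha : ∀ i ∈ s, ‖a i‖ < 1) (hC : ‖C‖ = 1)
    (hz : ‖z‖ = 1) :
    conj (blaschkeProduct C s a z) * z * deriv (blaschkeProduct C s a) z
      = ((∑ i ∈ s, (1 - ‖a i‖ ^ 2) / ‖1 - conj (a i) * z‖ ^ 2 : ℝ) : ℂ) := by
  classical
  have hlog := conj_prod_mul_sum_prod_erase_mul s (fun i => blaschkeFactor (a i) z)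
    (fun i => (1 - conj (a i) * a i) / (1 - conj (a i) * z) ^ 2)
    fun i hi => norm_blaschkeFactor (ha i hi) hz
  have hCC : conj C * C = 1 := by rw [Complex.conj_mul', hC]; simp
  rw [deriv_blaschkeProduct ha hz.le, blaschkeProduct, Complex.ofReal_sum, map_mul]
  calc _ = conj C * C * z * (conj (∏ i ∈ s, blaschkeFactor (a i) z)
          * ∑ i ∈ s, (∏ j ∈ s.erase i, blaschkeFactor (a j) z)
            * ((1 - conj (a i) * a i) / (1 - conj (a i) * z) ^ 2)) := by ring
    _ = ∑ i ∈ s, conj (blaschkeFactor (a i) z) * z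
          * ((1 - conj (a i) * a i) / (1 - conj (a i) * z) ^ 2) := by
      rw [hlog, hCC, one_mul, mul_sum]
      exact sum_congr rfl fun i _ => by ring
    _ = _ := sum_congr rfl fun i hi => conj_blaschkeFactor_mul_mul_deriv (ha i hi) hz

theorem norm_deriv_blaschkeProduct (ha : ∀ i ∈ s, ‖a i‖ < 1) (hC : ‖C‖ = 1) (hz : ‖z‖ = 1) :
    ‖deriv (blaschkeProduct C s a) z‖ = ∑ i ∈ s, (1 - ‖a i‖ ^ 2) / ‖1 - conj (a i) * z‖ ^ 2 := by
  have hterm : ∀ i ∈ s, 0 ≤ (1 - ‖a i‖ ^ 2) / ‖1 - conj (a i) * z‖ ^ 2 := fun i hi => by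
    have : 0 ≤ 1 - ‖a i‖ ^ 2 := by nlinarith [norm_nonneg (a i), ha i hi]
    positivity
  calc ‖deriv (blaschkeProduct C s a) z‖
      = ‖conj (blaschkeProduct C s a z) * z * deriv (blaschkeProduct C s a) z‖ := by
        rw [norm_mul, norm_mul, Complex.norm_conj, norm_blaschkeProduct ha hC hz, hz, one_mul,
          one_mul]
    _ = _ := by
      rw [conj_blaschkeProduct_mul_mul_deriv ha hC hz, Complex.norm_of_nonneg (sum_nonneg hterm)]

end BlaschkeProduct

theorem stmt_8 (n : ℕ) (a : Fin n → ℂ) (ha : ∀ i, ‖a i‖ < 1)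
    (C : ℂ) (hC : ‖C‖ = 1)
    (B : ℂ → ℂ)
    (hB : ∀ w : ℂ, B w = C * ∏ i, (w - a i) / (1 - (starRingEnd ℂ) (a i) * w))
    (hexp : (∑ i, (1 - ‖a i‖) / (1 + ‖a i‖)) > 1) :
    ∀ z : ℂ, ‖z‖ = 1 → 1 < ‖deriv B z‖ := by
  intro z hz
  have hBfun : B = blaschkeProduct C univ a := funext hB
  rw [hBfun, norm_deriv_blaschkeProduct (fun i _ => ha i) hC hz]
  calc (1 : ℝ) < ∑ i, (1 - ‖a i‖) / (1 + ‖a i‖) := hexp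
    _ ≤ _ := sum_le_sum fun i _ => one_sub_div_one_add_le (ha i) hz.le
end

section
/- Let H be a complex Banach space, let C, P : H → H be continuous linear maps with P ∘ P = P and C ∘ P = P, and set Q = id − P. Suppose μ ∈ ℂ with μ ≠ 0 and μ ≠ 1 is an eigenvalue of Q ∘ C, with eigenvector f ≠ 0, (Q ∘ C) f = μ f. Then the vector g = (1 − μ)·f − P(C f) is nonzero and satisfies C g = μ g; in particular μ is an eigenvalue of C. -/
/-!
If `(1 - P) C f = μ f` with `μ ≠ 0`, then applying the projection `P` (which annihilates
`1 - P`) shows `P f = 0`. Writing `C f = μ f + P (C f)` and using that `C` fixes the range of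
`P`, the corrected vector `(1 - μ) f - P (C f)` is an eigenvector of `C` for `μ`; it is nonzero
because its image under `P` is `-P (C f)`, so its vanishing would force `(1 - μ) f = 0`.
-/

namespace Module.End

variable {R M : Type*} [CommRing R] [AddCommGroup M] [Module R M] {C P : Module.End R M}
  {μ : R} {f : M}

def liftEigenvector (C P : Module.End R M) (μ : R) (f : M) : M := (1 - μ) • f - P (C f)

theorem smul_apply_eq_zero_of_sub_comp_apply_eq_smul (hP : IsIdempotentElem P)
    (hev : C f - P (C f) = μ • f) : μ • P f = 0 := by
  have hPP : P (P (C f)) = P (C f) := congr($hP (C f))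
  rw [← map_smul, ← hev, map_sub, hPP, sub_self]

theorem apply_liftEigenvector (hCP : C * P = P) (hev : C f - P (C f) = μ • f) :
    C (liftEigenvector C P μ f) = μ • liftEigenvector C P μ f := by
  have hCPC : C (P (C f)) = P (C f) := congr($hCP (C f))
  rw [liftEigenvector, map_sub, map_smul, hCPC]
  linear_combination (norm := module) (1 - μ) • hev

theorem liftEigenvector_ne_zero [IsDomain R] [IsTorsionFree R M] (hP : IsIdempotentElem P)
    (hμ0 : μ ≠ 0) (hμ1 : μ ≠ 1) (hf : f ≠ 0) (hev : C f - P (C f) = μ • f) :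
    liftEigenvector C P μ f ≠ 0 := by
  have hPf : P f = 0 :=
    (smul_eq_zero.mp (smul_apply_eq_zero_of_sub_comp_apply_eq_smul hP hev)).resolve_left hμ0
  have hPPC : P (P (C f)) = P (C f) := congr($hP (C f))
  intro hg
  have hPCf : P (C f) = 0 := by
    simpa [liftEigenvector, hPf, hPPC] using congr(P $hg)
  have : (1 - μ) • f = 0 := by simpa [liftEigenvector, hPCf] using hg
  exact hf ((smul_eq_zero.mp this).resolve_left (sub_ne_zero.mpr hμ1.symm))

end Module.End

open Module.End in
theorem stmt_13_general (H : Type*) [NormedAddCommGroup H] [NormedSpace ℂ H]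
    (C P : H →L[ℂ] H) (hP : P.comp P = P) (hCP : C.comp P = P)
    (μ : ℂ) (hμ0 : μ ≠ 0) (hμ1 : μ ≠ 1)
    (f : H) (hf : f ≠ 0)
    (hev : ((ContinuousLinearMap.id ℂ H - P).comp C) f = μ • f) :
    (1 - μ) • f - P (C f) ≠ 0 ∧ C ((1 - μ) • f - P (C f)) = μ • ((1 - μ) • f - P (C f)) := by
  have hP' : IsIdempotentElem (P : Module.End ℂ H) := LinearMap.ext fun x => congr($hP x)
  have hCP' : (C : Module.End ℂ H) * P = P := LinearMap.ext fun x => congr($hCP x)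
  have hev' : C f - P (C f) = μ • f := by simpa using hev
  exact ⟨liftEigenvector_ne_zero (C := (C : Module.End ℂ H)) hP' hμ0 hμ1 hf hev',
    apply_liftEigenvector (f := f) hCP' hev'⟩

theorem stmt_13 (H : Type*) [NormedAddCommGroup H] [NormedSpace ℂ H] [CompleteSpace H]
    (C P : H →L[ℂ] H) (hP : P.comp P = P) (hCP : C.comp P = P)
    (μ : ℂ) (hμ0 : μ ≠ 0) (hμ1 : μ ≠ 1)
    (f : H) (hf : f ≠ 0)
    (hev : ((ContinuousLinearMap.id ℂ H - P).comp C) f = μ • f) :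
    (1 - μ) • f - P (C f) ≠ 0 ∧ C ((1 - μ) • f - P (C f)) = μ • ((1 - μ) • f - P (C f)) :=
  stmt_13_general H C P hP hCP μ hμ0 hμ1 f hf hev
end

section
/- Let μ ∈ ℂ with |μ| < 1 and define B(z) = z·(μ − z)/(1 − conj(μ)·z). Then |B'(z)| > 1 for every z ∈ ℂ with |z| = 1, where B' denotes the complex derivative. Hence the restriction of B to the unit circle is an analytic expanding circle map, for every μ in the open unit disk. -/
/-!
With `a = conj μ * z` we have `B'(z) = (μ - 2z + conj μ z²) / (1 - a)²`. On `‖z‖ = 1` the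
numerator equals `z (a + conj a - 2)`, of modulus `2 (1 - Re a)`, while
`‖1 - a‖² = 1 - 2 Re a + ‖a‖² < 2 (1 - Re a)` because `‖a‖ = ‖μ‖ < 1`.
-/

open ComplexConjugate

noncomputable def degTwoBlaschke (μ w : ℂ) : ℂ := w * (μ - w) / (1 - conj μ * w)

theorem hasDerivAt_degTwoBlaschke {μ z : ℂ} (hz : 1 - conj μ * z ≠ 0) :
    HasDerivAt (degTwoBlaschke μ) ((μ - 2 * z + conj μ * z ^ 2) / (1 - conj μ * z) ^ 2) z := by
  have hnum := (hasDerivAt_id' z).fun_mul ((hasDerivAt_const z μ).fun_sub (hasDerivAt_id' z))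
  have hden := ((hasDerivAt_id' z).const_mul (conj μ)).const_sub 1
  exact (hnum.fun_div hden hz).congr_deriv (by ring)

theorem Complex.sq_norm_one_sub_lt {a : ℂ} (ha : ‖a‖ < 1) : ‖1 - a‖ ^ 2 < 2 * (1 - a.re) := by
  have ha2 : ‖a‖ ^ 2 < 1 := pow_lt_one₀ (norm_nonneg a) ha two_ne_zero
  have h := Complex.sq_norm_sub_sq_re a
  have h' := Complex.sq_norm_sub_sq_re (1 - a)
  simp only [Complex.sub_re, Complex.one_re, Complex.sub_im, Complex.one_im] at h'
  nlinarith

theorem norm_degTwoBlaschke_numerator {z : ℂ} (μ : ℂ) (hz : ‖z‖ = 1) :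
    ‖μ - 2 * z + conj μ * z ^ 2‖ = 2 * |1 - (conj μ * z).re| := by
  have hzz : z * conj z = 1 := by
    rw [Complex.mul_conj, Complex.normSq_eq_norm_sq, hz]; norm_num
  -- `μ = conj (conj μ * z) * z` on the unit circle
  have h : μ - 2 * z + conj μ * z ^ 2 = z * ((-(2 * (1 - (conj μ * z).re)) : ℝ) : ℂ) := by
    push_cast
    rw [Complex.re_eq_add_conj, map_mul, Complex.conj_conj]
    linear_combination (-μ) * hzz
  rw [h, norm_mul, hz, one_mul, Complex.norm_real, Real.norm_eq_abs, abs_neg, abs_mul, abs_two]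

theorem stmt_16 (μ : ℂ) (hμ : ‖μ‖ < 1)
    (B : ℂ → ℂ) (hB : ∀ w : ℂ, B w = w * (μ - w) / (1 - (starRingEnd ℂ) μ * w)) :
    ∀ z : ℂ, ‖z‖ = 1 → 1 < ‖deriv B z‖ := by
  intro z hz
  have hB_eq : B = degTwoBlaschke μ := funext hB
  have ha : ‖conj μ * z‖ < 1 := by rwa [norm_mul, Complex.norm_conj, hz, mul_one]
  have hre : (conj μ * z).re < 1 := (Complex.re_le_norm _).trans_lt ha
  have hden : 1 - conj μ * z ≠ 0 := sub_ne_zero.mpr fun h => by simp [← h] at ha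
  rw [hB_eq, (hasDerivAt_degTwoBlaschke hden).deriv, norm_div, norm_pow,
    norm_degTwoBlaschke_numerator μ hz, abs_of_pos (sub_pos.mpr hre),
    one_lt_div (pow_pos (norm_pos_iff.mpr hden) 2)]
  exact Complex.sq_norm_one_sub_lt ha
end
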